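/- arXiv:2106.14175 — 5 statements merged into one kernel-verified Lean document; each statement's English description precedes it below -/
import Mathlib

section
/- Let A and B be finitely generated (abstract) abelian groups, let t(A) be the order of the torsion subgroup of A, and let n = t(A)·m where m > 1 is an integer. If A/nA ≅ B/nB, then t(B) ≥ t(A), where t(B) is the order of the torsion subgroup of B. -/
/-- The set of torsion elements of an additive group. -/
def addTorsionSet (Q : Type*) [AddGroup Q] : Set Q := {x | ∃ n : ℕ, 0 < n ∧ n • x = 0}

/-- The subgroup `nA = {n•a : a ∈ A}` of an abelian group `A`, so that `A[n] := A ⧸ nA` is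
the largest quotient of `A` of exponent dividing `n`. -/
def nMultiples (n : ℕ) (A : Type*) [AddCommGroup A] : AddSubgroup A :=
  AddMonoidHom.range (n • AddMonoidHom.id A)

/-!
Write `A ≃ ℤ^r × T` and `B ≃ ℤ^s × U` with `T`, `U` finite, so that `t(A) = |T|` and
`t(B) = |U|`. Then `|A/nA| = n^r |T/nT| = n^r |T|`, because `|T|` divides `n`, and
`|B/nB| = n^s |U/nU|`. Since `|T| < n`, the equality `n^r |T| = n^s |U/nU|` forces `s ≤ r`, hence
`|T| ≤ n^(r-s) |T| = |U/nU| ≤ |U|`.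
-/

theorem Nat.le_of_pow_mul_eq_pow_mul {n a b r s : ℕ} (ha : a < n)
    (h : n ^ r * a = n ^ s * b) : a ≤ b := by
  have hn : 0 < n := a.zero_le.trans_lt ha
  rcases le_or_gt s r with hsr | hrs
  · obtain ⟨k, rfl⟩ := Nat.exists_eq_add_of_le hsr
    have hb : n ^ k * a = b := by
      rw [pow_add, mul_assoc] at h
      exact Nat.eq_of_mul_eq_mul_left (pow_pos hn s) h
    exact hb ▸ Nat.le_mul_of_pos_left a (pow_pos hn k)
  · obtain ⟨k, rfl⟩ := Nat.exists_eq_add_of_lt hrs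
    have ha' : a = n ^ (k + 1) * b := by
      rw [add_assoc, pow_add, mul_assoc] at h
      exact Nat.eq_of_mul_eq_mul_left (pow_pos hn r) h
    have hdvd : n ∣ a := ha' ▸ (dvd_pow_self n k.succ_ne_zero).mul_right b
    simp [Nat.eq_zero_of_dvd_of_lt hdvd ha]

theorem AddCommGroup.exists_addEquiv_pi_int_prod_finite (A : Type*) [AddCommGroup A]
    [AddGroup.FG A] :
    ∃ (r : ℕ) (T : Type) (_ : AddCommGroup T) (_ : Finite T),
      Nonempty (A ≃+ (Fin r → ℤ) × T) := by
  obtain ⟨r, ι, _, p, hp, e, ⟨f⟩⟩ := AddCommGroup.equiv_free_prod_directSum_zmod A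
  have : ∀ i, NeZero (p i ^ e i) := fun i => ⟨pow_ne_zero _ (hp i).ne_zero⟩
  have eFun := Finsupp.linearEquivFunOnFinite ℤ ℤ (Fin r)
  exact ⟨r, _, _, Finite.of_equiv _ DFinsupp.equivFunOnFintype.symm,
    ⟨f.trans (eFun.toAddEquiv.prodCongr (.refl _))⟩⟩

section

variable {A C : Type*} [AddCommGroup A] [AddCommGroup C]

theorem card_addTorsionSet_of_addEquiv_pi_int_prod {r : ℕ} {T : Type*} [AddCommGroup T]
    [Finite T] (e : A ≃+ (Fin r → ℤ) × T) : Nat.card (addTorsionSet A) = Nat.card T := by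
  have hset : addTorsionSet A = AddCommGroup.torsion A := by
    ext x
    exact isOfFinAddOrder_iff_nsmul_eq_zero.symm
  have hfree : AddCommGroup.torsion (Fin r → ℤ) = ⊥ :=
    AddCommGroup.isAddTorsionFree_iff_torsion_eq_bot.mp inferInstance
  have htors : AddCommGroup.torsion T = ⊤ :=
    AddCommGroup.torsion_eq_top_iff.mpr isAddTorsion_of_finite
  rw [hset, SetLike.coe_sort_coe,
    ← AddSubgroup.card_map_of_injective (f := (e : A →+ (Fin r → ℤ) × T)) e.injective,
    e.map_torsion, AddCommGroup.torsion_sum, hfree, htors,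
    Nat.card_congr (AddSubgroup.prodEquiv _ _).toEquiv, Nat.card_prod, AddSubgroup.card_bot,
    AddSubgroup.card_top, one_mul]

variable (n : ℕ)

theorem mem_nMultiples {x : A} : x ∈ nMultiples n A ↔ ∃ y, n • y = x := Iff.rfl

theorem map_nMultiples (e : A ≃+ C) : (nMultiples n A).map (e : A →+ C) = nMultiples n C := by
  ext c
  simp only [AddSubgroup.mem_map, mem_nMultiples]
  constructor
  · rintro ⟨_, ⟨y, rfl⟩, rfl⟩
    exact ⟨e y, (map_nsmul e n y).symm⟩
  · rintro ⟨y, rfl⟩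
    exact ⟨n • e.symm y, ⟨_, rfl⟩, by simp⟩

theorem nMultiples_prod : nMultiples n (A × C) = (nMultiples n A).prod (nMultiples n C) := by
  ext ⟨x, y⟩
  simp [mem_nMultiples, AddSubgroup.mem_prod]

theorem nMultiples_pi {ι : Type*} (G : ι → Type*) [∀ i, AddCommGroup (G i)] :
    nMultiples n (∀ i, G i) = AddSubgroup.pi Set.univ fun i => nMultiples n (G i) := by
  ext x
  simp only [mem_nMultiples, AddSubgroup.mem_pi, Set.mem_univ, forall_const, funext_iff,
    Pi.smul_apply, Classical.skolem]

theorem nMultiples_int : nMultiples n ℤ = AddSubgroup.zmultiples (n : ℤ) :=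
  Int.range_nsmulAddMonoidHom n

theorem nMultiples_eq_bot_of_card_dvd [Finite A] (h : Nat.card A ∣ n) : nMultiples n A = ⊥ :=
  AddMonoidHom.range_eq_bot_iff.mpr <| AddMonoidHom.ext fun x =>
    addOrderOf_dvd_iff_nsmul_eq_zero.mp ((addOrderOf_dvd_natCard x).trans h)

theorem index_nMultiples_pi_int (r : ℕ) : (nMultiples n (Fin r → ℤ)).index = n ^ r := by
  rw [nMultiples_pi, AddSubgroup.index_pi, nMultiples_int, Int.index_zmultiples]
  simp

theorem index_nMultiples_of_addEquiv_pi_int_prod {r : ℕ} {T : Type*} [AddCommGroup T]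
    (e : A ≃+ (Fin r → ℤ) × T) :
    (nMultiples n A).index = n ^ r * (nMultiples n T).index := by
  rw [← AddSubgroup.index_map_equiv _ e, map_nMultiples, nMultiples_prod,
    AddSubgroup.index_prod, index_nMultiples_pi_int]

end

/-- Lemma 3(2): let `A`, `B` be finitely generated abelian groups, `t(A)` the order of the
torsion subgroup of `A`, and `n = t(A) * m` with `m > 1` an integer. If `A/nA ≅ B/nB` then
`t(B) ≥ t(A)`. -/
theorem torsion_le_of_quotient_iso (A B : Type*) [AddCommGroup A] [AddCommGroup B]
    [AddGroup.FG A] [AddGroup.FG B] (m n : ℕ) (hm : 1 < m)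
    (hn : n = Nat.card (addTorsionSet A) * m)
    (hiso : Nonempty ((A ⧸ nMultiples n A) ≃+ (B ⧸ nMultiples n B))) :
    Nat.card (addTorsionSet A) ≤ Nat.card (addTorsionSet B) := by
  obtain ⟨r, T, _, _, ⟨eA⟩⟩ := AddCommGroup.exists_addEquiv_pi_int_prod_finite A
  obtain ⟨s, U, _, _, ⟨eB⟩⟩ := AddCommGroup.exists_addEquiv_pi_int_prod_finite B
  rw [card_addTorsionSet_of_addEquiv_pi_int_prod eA] at hn ⊢
  rw [card_addTorsionSet_of_addEquiv_pi_int_prod eB]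
  have hindex : n ^ r * Nat.card T = n ^ s * (nMultiples n U).index := by
    rw [← index_nMultiples_of_addEquiv_pi_int_prod n eB, ← AddSubgroup.index_bot,
      ← nMultiples_eq_bot_of_card_dvd n (hn ▸ dvd_mul_right _ _),
      ← index_nMultiples_of_addEquiv_pi_int_prod n eA]
    exact Nat.card_congr hiso.some.toEquiv
  calc Nat.card T ≤ (nMultiples n U).index :=
        Nat.le_of_pow_mul_eq_pow_mul (hn ▸ lt_mul_of_one_lt_right Nat.card_pos hm) hindex
    _ ≤ Nat.card U := Nat.le_of_dvd Nat.card_pos (AddSubgroup.index_dvd_card _)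
end

section
/- Let G be a finite group, p a prime, and M a finitely generated ℤG-module which is torsion-free as a ℤ-module and such that M ⊗_ℤ ℚ is generated by d elements as a ℚG-module. Let m₁, …, m_d ∈ M generate a ℤG-submodule of infinite index in M. Then there exist elements h₁, …, h_d ∈ M such that, defining K_n to be the ℤG-submodule of M generated by m₁ + pⁿh₁, …, m_d + pⁿh_d, one has t_p(M/K_n) → ∞ as n → ∞. -/
/-- Coefficientwise cast `ℤG → ℚG` of group-ring elements. -/
noncomputable def intCastMA (G : Type*) (x : MonoidAlgebra ℤ G) : MonoidAlgebra ℚ G :=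
  MonoidAlgebra.ofCoeff (Finsupp.mapRange (fun n : ℤ => (n : ℚ)) Int.cast_zero x.coeff)

open Filter Function Set Submodule

theorem LinearMap.finite_setOf_not_surjective_add_smul {K V W : Type*} [Field K]
    [AddCommGroup V] [Module K V] [AddCommGroup W] [Module K W] [FiniteDimensional K W]
    (A B : V →ₗ[K] W) (hB : Surjective B) : {t : K | ¬Surjective (A + t • B)}.Finite := by
  obtain ⟨σ, hσ⟩ := B.exists_rightInverse_of_surjective (range_eq_top.mpr hB)
  -- `(A + t • B) ∘ σ = A ∘ σ + t`, which is invertible unless `-t` is in the spectrum of `A ∘ σ`.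
  refine ((Module.End.finite_spectrum (A ∘ₗ σ)).preimage neg_injective.injOn).subset fun t ht => ?_
  by_contra hspec
  apply ht
  have hunit : IsUnit (-(algebraMap K (Module.End K W) (-t) - A ∘ₗ σ)) :=
    (spectrum.notMem_iff.mp hspec).neg
  intro w
  obtain ⟨u, rfl⟩ := ((Module.End.isUnit_iff _).mp hunit).surjective w
  have hBσ : B (σ u) = u := LinearMap.congr_fun hσ u
  exact ⟨σ u, by simp [hBσ]⟩

theorem Submodule.finite_setOf_span_range_add_smul_ne_top {K R V κ : Type*} [Field K] [Ring R]
    [Algebra K R] [AddCommGroup V] [Module K V] [Module R V] [IsScalarTower K R V]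
    [FiniteDimensional K V] [Fintype κ] (a b : κ → V) (hb : span R (range b) = ⊤) :
    {t : K | span R (range (a + t • b)) ≠ ⊤}.Finite := by
  rw [span_range_eq_top_iff_surjective_fintypeLinearCombination] at hb
  refine (LinearMap.finite_setOf_not_surjective_add_smul
    ((Fintype.linearCombination R a).restrictScalars K)
    ((Fintype.linearCombination R b).restrictScalars K) hb).subset fun t ht => ?_
  rw [mem_ofPred_eq, Ne, span_range_eq_top_iff_surjective_fintypeLinearCombination] at ht
  convert ht using 2
  ext v
  simp [Fintype.linearCombination_apply, smul_add, Finset.sum_add_distrib, Finset.smul_sum,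
    smul_comm t]

theorem FiniteDimensional.of_forall_exists_smul_mem_range {M V : Type*} [AddCommGroup M]
    [AddGroup.FG M] [AddCommGroup V] [Module ℚ V] (ι : M →+ V)
    (hdiv : ∀ y : V, ∃ (c : ℤ) (x : M), c ≠ 0 ∧ (c : ℚ) • y = ι x) : FiniteDimensional ℚ V := by
  classical
  have : Module.Finite ℤ M := Module.Finite.iff_addGroup_fg.mpr ‹_›
  obtain ⟨S, hS⟩ := Module.Finite.fg_top (R := ℤ) (M := M)
  refine ⟨⟨S.image ι, eq_top_iff.2 fun y _ => ?_⟩⟩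
  obtain ⟨c, x, hc, hx⟩ := hdiv y
  have hιx : ι x ∈ span ℚ (ι '' S) := by
    refine span_le_restrictScalars ℤ ℚ _ ?_
    rw [← AddMonoidHom.coe_toIntLinearMap, ← map_span, hS]
    exact mem_map_of_mem mem_top
  rw [← inv_smul_smul₀ (Int.cast_ne_zero.mpr hc : (c : ℚ) ≠ 0) y, hx, Finset.coe_image]
  exact smul_mem _ _ hιx

theorem exists_span_range_comp_eq_top {R M V κ : Type*} [Ring R] [Algebra ℚ R] [AddCommGroup M]
    [AddCommGroup V] [Module ℚ V] [Module R V] [IsScalarTower ℚ R V] (ι : M →+ V)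
    (hdiv : ∀ y : V, ∃ (c : ℤ) (x : M), c ≠ 0 ∧ (c : ℚ) • y = ι x) {y : κ → V}
    (hy : span R (range y) = ⊤) : ∃ h : κ → M, span R (range (ι ∘ h)) = ⊤ := by
  choose c x hc hx using fun i => hdiv (y i)
  refine ⟨x, eq_top_iff.2 (hy ▸ span_le.2 ?_)⟩
  rintro _ ⟨i, rfl⟩
  rw [← inv_smul_smul₀ (Int.cast_ne_zero.mpr (hc i) : (c i : ℚ) ≠ 0) (y i), hx]
  exact smul_of_tower_mem _ _ (subset_span ⟨i, rfl⟩)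

theorem AddSubgroup.finite_quotient_of_span_rat_image_eq_top {M V : Type*} [AddCommGroup M]
    [AddGroup.FG M] [AddCommGroup V] [Module ℚ V] {ι : M →+ V} (hinj : Injective ι)
    {H : AddSubgroup M} (hH : span ℚ (ι '' H) = ⊤) : Finite (M ⧸ H) := by
  have : AddGroup.FG (M ⧸ H) := AddGroup.fg_of_surjective (QuotientAddGroup.mk'_surjective H)
  refine AddCommGroup.finite_of_fg_isAddTorsion _ fun x => ?_
  obtain ⟨x, rfl⟩ := QuotientAddGroup.mk'_surjective H x
  -- Clearing denominators: a nonzero integer multiple of `ι x` lies in `ι '' H`.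
  obtain ⟨y, hy, c, hc⟩ := (IsLocalization.mem_span_iff (nonZeroDivisors ℤ) (S := ℚ)).1
    (hH ▸ Submodule.mem_top : ι x ∈ span ℚ (ι '' H))
  rw [← AddMonoidHom.coe_toIntLinearMap, ← map_span, ← H.coe_toIntSubmodule, span_eq] at hy
  obtain ⟨k, hk, rfl⟩ := hy
  have hcx : (c : ℤ) • x = k := by
    apply hinj
    have hc1 := IsLocalization.mk'_spec' ℚ (1 : ℤ) c
    simp only [algebraMap_int_eq, eq_intCast, Int.cast_one] at hc1
    rw [map_zsmul, hc, ← Int.cast_smul_eq_zsmul ℚ, smul_smul, hc1, one_smul]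
    rfl
  refine isOfFinAddOrder_iff_zsmul_eq_zero.2 ⟨c, nonZeroDivisors.ne_zero c.2, ?_⟩
  rw [← map_zsmul, hcx]
  exact (QuotientAddGroup.eq_zero_iff k).2 hk

section GroupRing

variable {G M 𝓜 : Type*} [Group G] [AddCommGroup M] [Module (MonoidAlgebra ℤ G) M]
  [AddCommGroup 𝓜] [Module ℚ 𝓜] [Module (MonoidAlgebra ℚ G) 𝓜] {ι : M →+ 𝓜}

theorem MonoidAlgebra.of_smul_mem_span_rat_image
    (hequiv : ∀ (g : G) (x : M), ι (MonoidAlgebra.of ℤ G g • x) = MonoidAlgebra.of ℚ G g • ι x)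
    (K : Submodule (MonoidAlgebra ℤ G) M) (g : G) {z : 𝓜} (hz : z ∈ span ℚ (ι '' K)) :
    MonoidAlgebra.of ℚ G g • z ∈ span ℚ (ι '' K) := by
  induction hz using span_induction with
  | mem _ hw =>
    obtain ⟨k, hk, rfl⟩ := hw
    exact subset_span ⟨_, K.smul_mem _ hk, hequiv g k⟩
  | zero => simp
  | add _ _ _ _ hx hy => simpa only [smul_add] using add_mem hx hy
  | smul q _ _ hx => simpa only [smul_comm _ q] using smul_mem _ q hx

theorem span_rat_image_eq_top_of_span_eq_top [IsScalarTower ℚ (MonoidAlgebra ℚ G) 𝓜]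
    (hequiv : ∀ (g : G) (x : M), ι (MonoidAlgebra.of ℤ G g • x) = MonoidAlgebra.of ℚ G g • ι x)
    {K : Submodule (MonoidAlgebra ℤ G) M} (hK : span (MonoidAlgebra ℚ G) (ι '' K) = ⊤) :
    span ℚ (ι '' K) = ⊤ := by
  suffices key : ∀ z ∈ span (MonoidAlgebra ℚ G) (ι '' K), z ∈ span ℚ (ι '' K) from
    eq_top_iff.2 fun z _ => key z (hK ▸ Submodule.mem_top)
  intro z hz
  induction hz using span_induction with
  | mem _ hw => exact subset_span hw
  | zero => exact zero_mem _
  | add _ _ _ _ hx hy => exact add_mem hx hy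
  | smul r w _ hw =>
    induction r using MonoidAlgebra.induction_linear with
    | zero => simp
    | add r r' hr hr' => simpa only [add_smul] using add_mem hr hr'
    | single g q =>
      rw [← mul_one q, ← smul_eq_mul, ← MonoidAlgebra.smul_single, smul_assoc]
      exact smul_mem _ q (MonoidAlgebra.of_smul_mem_span_rat_image hequiv K g hw)

theorem finite_quotient_of_span_range_comp_eq_top [AddGroup.FG M]
    [IsScalarTower ℚ (MonoidAlgebra ℚ G) 𝓜] (hinj : Injective ι)
    (hequiv : ∀ (g : G) (x : M), ι (MonoidAlgebra.of ℤ G g • x) = MonoidAlgebra.of ℚ G g • ι x)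
    {κ : Type*} {v : κ → M} (hv : span (MonoidAlgebra ℚ G) (range (ι ∘ v)) = ⊤) :
    Finite (M ⧸ span (MonoidAlgebra ℤ G) (range v)) := by
  refine AddSubgroup.finite_quotient_of_span_rat_image_eq_top hinj
    (span_rat_image_eq_top_of_span_eq_top hequiv (eq_top_iff.2 (hv ▸ span_mono ?_)))
  rintro _ ⟨i, rfl⟩
  exact ⟨v i, subset_span ⟨i, rfl⟩, rfl⟩

end GroupRing

theorem AddCommGroup.exists_surjective_addMonoidHom_int (Q : Type*) [AddCommGroup Q]
    [AddGroup.FG Q] [Infinite Q] : ∃ f : Q →+ ℤ, Surjective f := by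
  have : Module.Finite ℤ Q := Module.Finite.iff_addGroup_fg.mpr ‹_›
  have : Nontrivial (Q ⧸ Submodule.torsion ℤ Q) := by
    rw [Submodule.Quotient.nontrivial_iff]
    intro htop
    have := Module.finite_of_fg_torsion Q fun x => by
      simpa using (htop ▸ Submodule.mem_top : x ∈ Submodule.torsion ℤ Q)
    exact not_finite Q
  let b := Module.Free.chooseBasis ℤ (Q ⧸ Submodule.torsion ℤ Q)
  obtain ⟨i⟩ := b.index_nonempty
  have hcoord : Surjective (b.coord i) := fun t => ⟨t • b i, by simp⟩
  exact ⟨((b.coord i).comp (Submodule.torsion ℤ Q).mkQ).toAddMonoidHom,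
    hcoord.comp (mkQ_surjective _)⟩

theorem Submodule.exists_surjective_addMonoidHom_int_of_infinite_quotient {R M : Type*} [Ring R]
    [AddCommGroup M] [Module R M] [AddGroup.FG M] (K : Submodule R M) [Infinite (M ⧸ K)] :
    ∃ s : M →+ ℤ, Surjective s ∧ ∀ x ∈ K, s x = 0 := by
  have : AddGroup.FG (M ⧸ K) :=
    AddGroup.fg_of_surjective (f := K.mkQ.toAddMonoidHom) K.mkQ_surjective
  obtain ⟨f, hf⟩ := AddCommGroup.exists_surjective_addMonoidHom_int (M ⧸ K)
  refine ⟨f.comp K.mkQ.toAddMonoidHom, hf.comp K.mkQ_surjective, fun x hx => ?_⟩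
  simp [(Submodule.Quotient.mk_eq_zero K).2 hx]

theorem dvd_card_quotient_span_add_smul {R M κ : Type*} [Ring R] [AddCommGroup M] [Module R M]
    [Fintype κ] {s : M →+ ℤ} (hs : Surjective s) {m : κ → M}
    (hm : ∀ x ∈ span R (range m), s x = 0) (h : κ → M) (c : ℕ) :
    c ∣ Nat.card (M ⧸ span R (range fun i => m i + (c : ℤ) • h i)) := by
  set φ := (Int.castAddHom (ZMod c)).comp s
  have hφ : ∀ x ∈ (span R (range fun i => m i + (c : ℤ) • h i)).toAddSubgroup, φ x = 0 := by
    intro x hx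
    obtain ⟨a, rfl⟩ := (mem_span_range_iff_exists_fun R).1 hx
    have hsplit :
        ∑ i, a i • (m i + (c : ℤ) • h i) = ∑ i, a i • m i + (c : ℤ) • ∑ i, a i • h i := by
      simp only [smul_add, smul_comm _ (c : ℤ), Finset.sum_add_distrib, Finset.smul_sum]
    have hm' : s (∑ i, a i • m i) = 0 :=
      hm _ (sum_mem fun i _ => smul_mem _ _ (subset_span ⟨i, rfl⟩))
    simp only [φ, AddMonoidHom.comp_apply, hsplit, map_add, hm', map_zsmul]
    simp
  have hφ_surj : Surjective (QuotientAddGroup.lift _ φ hφ) := fun z => by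
    obtain ⟨x, rfl⟩ := (ZMod.intCast_surjective.comp hs) z
    exact ⟨x, rfl⟩
  have := AddSubgroup.card_dvd_of_surjective _ hφ_surj
  rwa [Nat.card_zmod] at this

theorem addTorsionSet_eq_univ (Q : Type*) [AddGroup Q] [Finite Q] : addTorsionSet Q = univ :=
  eq_univ_of_forall fun x => ⟨addOrderOf x, addOrderOf_pos x, addOrderOf_nsmul_eq_zero x⟩

/-- `𝓜` stands for `M ⊗_ℤ ℚ`, with `ι m = 1 ⊗ m`; `hdiv` says that `𝓜 = ℚ · ι(M)`. -/
theorem tendsto_torsion_quotient_perturbed_submodule_general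
    (p : ℕ) (hp : p.Prime) (G : Type*) [Group G] [Finite G]
    (M : Type*) [AddCommGroup M] [Module (MonoidAlgebra ℤ G) M]
    [Module.Finite (MonoidAlgebra ℤ G) M]
    (𝓜 : Type*) [AddCommGroup 𝓜] [Module ℚ 𝓜] [Module (MonoidAlgebra ℚ G) 𝓜]
    [IsScalarTower ℚ (MonoidAlgebra ℚ G) 𝓜]
    (ι : M →+ 𝓜) (hinj : Function.Injective ι)
    (hequiv : ∀ (g : G) (x : M),
      ι (MonoidAlgebra.of ℤ G g • x) = MonoidAlgebra.of ℚ G g • ι x)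
    (hdiv : ∀ y : 𝓜, ∃ (c : ℤ) (x : M), c ≠ 0 ∧ (c : ℚ) • y = ι x)
    (d : ℕ)
    (hgen : ∃ y : Fin d → 𝓜, Submodule.span (MonoidAlgebra ℚ G) (Set.range y) = ⊤)
    (m : Fin d → M)
    (hU : Infinite (M ⧸ Submodule.span (MonoidAlgebra ℤ G) (Set.range m))) :
    ∃ h : Fin d → M,
      Filter.Tendsto
        (fun n : ℕ => p ^ ((Nat.card (addTorsionSet
          (M ⧸ Submodule.span (MonoidAlgebra ℤ G)
            (Set.range fun i => m i + ((p : ℤ) ^ n) • h i)))).factorization p))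
        Filter.atTop Filter.atTop := by
  have : AddGroup.FG M :=
    Module.Finite.iff_addGroup_fg.mp (Module.Finite.trans (MonoidAlgebra ℤ G) M)
  have : FiniteDimensional ℚ 𝓜 := .of_forall_exists_smul_mem_range ι hdiv
  obtain ⟨y, hy⟩ := hgen
  obtain ⟨h, hh⟩ := exists_span_range_comp_eq_top ι hdiv hy
  have := hU
  obtain ⟨s, hs, hs0⟩ :=
    exists_surjective_addMonoidHom_int_of_infinite_quotient (span (MonoidAlgebra ℤ G) (range m))
  refine ⟨h, tendsto_atTop_mono' _ ?_ (tendsto_pow_atTop_atTop_of_one_lt hp.one_lt)⟩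
  have hp_pow_inj : Injective fun n : ℕ => (p : ℚ) ^ n :=
    pow_right_injective₀ (by exact_mod_cast hp.pos) (by exact_mod_cast hp.ne_one)
  have hbad := (finite_setOf_span_range_add_smul_ne_top (ι ∘ m) (ι ∘ h) hh).preimage
    hp_pow_inj.injOn
  filter_upwards [Nat.cofinite_eq_atTop ▸ hbad.eventually_cofinite_notMem] with n hn
  rw [mem_preimage, mem_ofPred_eq, not_not] at hn
  have hι : ι ∘ (fun i => m i + ((p : ℤ) ^ n) • h i) = ι ∘ m + ((p : ℚ) ^ n) • (ι ∘ h) := by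
    ext i
    simp [← Int.cast_smul_eq_zsmul ℚ]
  have := finite_quotient_of_span_range_comp_eq_top hinj hequiv (hι ▸ hn)
  have hdvd := dvd_card_quotient_span_add_smul hs hs0 h (p ^ n)
  push_cast at hdvd
  rw [addTorsionSet_eq_univ, Nat.card_univ]
  exact Nat.pow_le_pow_right hp.pos ((hp.pow_dvd_iff_le_factorization Nat.card_pos.ne').1 hdvd)

/-- Lemma: let `G` be a finite group and `p` a prime. Let `M` be a finitely generated
`ℤG`-module, torsion-free as a `ℤ`-module, such that `M ⊗_ℤ ℚ` (realized as any `ℚG`-module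
`𝓜` containing `M` via `ι : m ↦ 1 ⊗ m`, with `𝓜 = ℚ·ι(M)`) is `d`-generated as a
`ℚG`-module.  Let `m₁, …, m_d ∈ M` generate a `ℤG`-submodule of infinite index in `M`.
Then there are `h₁, …, h_d ∈ M` such that, with `K_n` the `ℤG`-submodule of `M` generated
by the `mᵢ + pⁿ hᵢ`, the `p`-part `t_p(M / K_n)` of the torsion of `M / K_n` tends to `∞`
as `n → ∞`. -/
theorem tendsto_torsion_quotient_perturbed_submodule
    (p : ℕ) (hp : p.Prime) (G : Type*) [Group G] [Finite G]
    (M : Type*) [AddCommGroup M] [Module (MonoidAlgebra ℤ G) M]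
    [Module.Finite (MonoidAlgebra ℤ G) M] [NoZeroSMulDivisors ℤ M]
    (𝓜 : Type*) [AddCommGroup 𝓜] [Module ℚ 𝓜] [Module (MonoidAlgebra ℚ G) 𝓜]
    [IsScalarTower ℚ (MonoidAlgebra ℚ G) 𝓜]
    (ι : M →+ 𝓜) (hinj : Function.Injective ι)
    (hequiv : ∀ (g : G) (x : M),
      ι (MonoidAlgebra.of ℤ G g • x) = MonoidAlgebra.of ℚ G g • ι x)
    (hdiv : ∀ y : 𝓜, ∃ (c : ℤ) (x : M), c ≠ 0 ∧ (c : ℚ) • y = ι x)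
    (d : ℕ)
    (hgen : ∃ y : Fin d → 𝓜, Submodule.span (MonoidAlgebra ℚ G) (Set.range y) = ⊤)
    (m : Fin d → M)
    (hU : Infinite (M ⧸ Submodule.span (MonoidAlgebra ℤ G) (Set.range m))) :
    ∃ h : Fin d → M,
      Filter.Tendsto
        (fun n : ℕ => p ^ ((Nat.card (addTorsionSet
          (M ⧸ Submodule.span (MonoidAlgebra ℤ G)
            (Set.range fun i => m i + ((p : ℤ) ^ n) • h i)))).factorization p))
        Filter.atTop Filter.atTop :=
  tendsto_torsion_quotient_perturbed_submodule_general p hp G M 𝓜 ι hinj hequiv hdiv d hgen m hU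
end

section
/- Let G be a finite group, M a finitely generated ℤG-module which is torsion-free as a ℤ-module, and m₁, …, m_d ∈ M elements generating a ℤG-submodule U of infinite index in M; assume 𝓜 := M ⊗_ℤ ℚ is d-generated as a ℚG-module. Write 𝓤 := U ⊗_ℤ ℚ and choose a ℚG-module complement 𝓥 with 𝓜 = 𝓤 ⊕ 𝓥; set V := M ∩ 𝓥. Let f : (ℚG)^{(d)} → 𝓜 be the ℚG-homomorphism f(r₁,…,r_d) = Σᵢ rᵢmᵢ, let 𝓛 := ker f and L := 𝓛 ∩ (ℤG)^{(d)}. Then there exist elements h₁, …, h_d ∈ V and a tuple (s₁, …, s_d) ∈ L such that Σ_{i=1}^{d} sᵢhᵢ ≠ 0. -/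
open Submodule Set

theorem LinearMap.surjective_of_ker_le_ker {K V W : Type*} [DivisionRing K]
    [AddCommGroup V] [Module K V] [FiniteDimensional K V] [AddCommGroup W] [Module K W]
    {f g : V →ₗ[K] W} (hker : ker f ≤ ker g) (hg : Function.Surjective g) :
    Function.Surjective f := by
  have : FiniteDimensional K W := Module.Finite.of_surjective g hg
  rw [← range_eq_top]
  apply Submodule.eq_top_of_finrank_eq
  have hf := finrank_range_add_finrank_ker f
  have hg' := finrank_range_add_finrank_ker g
  have hle := Submodule.finrank_mono hker
  have hfW := Submodule.finrank_le (range f)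
  rw [range_eq_top.2 hg, finrank_top] at hg'
  omega

section AnnihilatorOfComplement

variable {R M κ : Type*} [Ring R] [AddCommGroup M] [Module R M] [Fintype κ]
  {m : κ → M} {V : Submodule R M}

theorem smul_mem_map_pi_annihilator (hV : span R (range m) ⊔ V = ⊤) {a : R}
    (ha : a ∈ V.annihilator) (x : M) :
    a • x ∈ (pi univ fun _ => V.annihilator).map (Fintype.linearCombination R m) := by
  obtain ⟨u, hu, v, hv, rfl⟩ := mem_sup.1 (hV ▸ mem_top : x ∈ span R (range m) ⊔ V)
  rw [← Fintype.range_linearCombination R m] at hu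
  obtain ⟨c, rfl⟩ := hu
  rw [smul_add, mem_annihilator.1 ha v hv, add_zero, ← map_smul]
  exact mem_map_of_mem fun i _ => Ideal.mul_mem_right (c i) _ ha

theorem span_eq_top_of_ker_linearCombination_le_pi_annihilator (K : Type*) [Field K]
    [Algebra K R] [Module.Finite K R] [Module K M] [IsScalarTower K R M] {y : κ → M}
    (hy : span R (range y) = ⊤) (hV : span R (range m) ⊔ V = ⊤)
    (hker : LinearMap.ker (Fintype.linearCombination R m) ≤ pi univ fun _ => V.annihilator) :
    span R (range m) = ⊤ := by
  set φ := Fintype.linearCombination R m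
  set ψ := Fintype.linearCombination R y
  set P : Submodule R (κ → R) := pi univ fun _ => V.annihilator
  set W := P.map φ
  have hWU : W ≤ span R (range m) := Fintype.range_linearCombination R m ▸ LinearMap.map_le_range
  have hkerφ : LinearMap.ker (W.mkQ ∘ₗ φ) ≤ P := by
    intro t ht
    obtain ⟨a, ha, hat⟩ : φ t ∈ W := by simpa using ht
    have : t - a ∈ P := hker (by simp [map_sub, hat])
    simpa using P.add_mem this ha
  have hkerψ : P ≤ LinearMap.ker (W.mkQ ∘ₗ ψ) := by
    intro a ha
    simp only [LinearMap.mem_ker, LinearMap.comp_apply, mkQ_apply, Quotient.mk_eq_zero, ψ,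
      Fintype.linearCombination_apply]
    exact sum_mem fun i _ => smul_mem_map_pi_annihilator hV (ha i trivial) _
  have hψ : Function.Surjective (W.mkQ ∘ₗ ψ) := W.mkQ_surjective.comp
    ((span_range_eq_top_iff_surjective_fintypeLinearCombination R y).1 hy)
  have hφ : Function.Surjective ((W.mkQ ∘ₗ φ).restrictScalars K) :=
    LinearMap.surjective_of_ker_le_ker (g := (W.mkQ ∘ₗ ψ).restrictScalars K)
      (fun t ht => hkerψ (hkerφ ht)) hψ
  refine eq_top_iff.2 fun x _ => ?_
  obtain ⟨t, ht⟩ := hφ (W.mkQ x)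
  have hx : φ t - x ∈ W := (Submodule.Quotient.eq W).1 ht
  have hφt : φ t ∈ span R (range m) :=
    Fintype.range_linearCombination R m ▸ LinearMap.mem_range_self φ t
  simpa using sub_mem hφt (hWU hx)

end AnnihilatorOfComplement

section GroupRing

variable {G : Type*}

theorem exists_intCastMA_eq_smul {κ : Type*} [Fintype κ] (r : κ → MonoidAlgebra ℚ G) :
    ∃ N : ℤ, N ≠ 0 ∧ ∃ s : κ → MonoidAlgebra ℤ G, ∀ i, intCastMA G (s i) = (N : ℚ) • r i := by
  classical
  obtain ⟨N, hN⟩ := IsLocalization.exist_integer_multiples_of_finset (nonZeroDivisors ℤ)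
    (Finset.univ.biUnion fun i => (r i).coeff.frange)
  have hnum : ∀ i g, ((((N : ℤ) : ℚ) * (r i).coeff g).num : ℚ) = (N : ℤ) * (r i).coeff g := by
    intro i g
    by_cases h0 : (r i).coeff g = 0
    · simp [h0]
    obtain ⟨z, hz⟩ := hN _ (Finset.mem_biUnion.2
      ⟨i, Finset.mem_univ _, Finsupp.mem_frange.2 ⟨h0, g, rfl⟩⟩)
    rw [zsmul_eq_mul] at hz
    simp [← hz]
  refine ⟨N, nonZeroDivisors.coe_ne_zero N, fun i => MonoidAlgebra.ofCoeff
    ((r i).coeff.mapRange (fun q => (((N : ℤ) : ℚ) * q).num) (by simp)), fun i => ?_⟩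
  ext g
  simp [intCastMA, hnum]

variable [Monoid G]

theorem intCastMA_eq_mapRingHom (x : MonoidAlgebra ℤ G) :
    intCastMA G x = MonoidAlgebra.mapRingHom G (Int.castRingHom ℚ) x :=
  rfl

variable {M 𝓜 : Type*} [AddCommGroup M] [Module (MonoidAlgebra ℤ G) M]
  [AddCommGroup 𝓜] [Module (MonoidAlgebra ℚ G) 𝓜]

theorem map_smul_eq_intCastMA_smul (ι : M →+ 𝓜)
    (hequiv : ∀ (g : G) (x : M), ι (MonoidAlgebra.of ℤ G g • x) = MonoidAlgebra.of ℚ G g • ι x)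
    (s : MonoidAlgebra ℤ G) (x : M) : ι (s • x) = intCastMA G s • ι x := by
  rw [intCastMA_eq_mapRingHom]
  induction s using MonoidAlgebra.induction_linear with
  | zero => simp
  | add a b ha hb => rw [add_smul, map_add, ha, hb, map_add, add_smul]
  | single g n =>
      have hℤ : MonoidAlgebra.single g n = n • MonoidAlgebra.of ℤ G g := by
        simp [MonoidAlgebra.smul_single]
      have hℚ : MonoidAlgebra.single g (n : ℚ) = n • MonoidAlgebra.of ℚ G g := by
        simp [MonoidAlgebra.smul_single]
      rw [MonoidAlgebra.mapRingHom_single, hℤ, eq_intCast, hℚ, smul_assoc, smul_assoc, map_zsmul,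
        hequiv]

theorem ker_linearCombination_le_pi_annihilator [Module ℚ 𝓜]
    [IsScalarTower ℚ (MonoidAlgebra ℚ G) 𝓜] (ι : M →+ 𝓜)
    (hequiv : ∀ (g : G) (x : M), ι (MonoidAlgebra.of ℤ G g • x) = MonoidAlgebra.of ℚ G g • ι x)
    (hdiv : ∀ y : 𝓜, ∃ (c : ℤ) (x : M), c ≠ 0 ∧ (c : ℚ) • y = ι x)
    {κ : Type*} [Fintype κ] (m : κ → M) (V : Submodule (MonoidAlgebra ℚ G) 𝓜)
    (hV : ∀ (h : κ → M) (s : κ → MonoidAlgebra ℤ G), (∀ i, ι (h i) ∈ V) →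
      ∑ i, intCastMA G (s i) • ι (m i) = 0 → ∑ i, s i • h i = 0) :
    LinearMap.ker (Fintype.linearCombination (MonoidAlgebra ℚ G) fun i => ι (m i)) ≤
      pi univ fun _ => V.annihilator := by
  classical
  intro r hr j _
  rw [LinearMap.mem_ker, Fintype.linearCombination_apply] at hr
  refine mem_annihilator.2 fun v hv => ?_
  obtain ⟨c, x, hc, hcx⟩ := hdiv v
  obtain ⟨N, hN, s, hs⟩ := exists_intCastMA_eq_smul r
  have hrel : ∑ i, intCastMA G (s i) • ι (m i) = 0 := by
    simp_rw [hs, smul_assoc, ← Finset.smul_sum, hr, smul_zero]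
  have hxV : ι x ∈ V := hcx ▸ V.smul_of_tower_mem _ hv
  have hsx : s j • x = 0 := by
    have hmem : ∀ i, ι ((Pi.single j x : κ → M) i) ∈ V := fun i => by
      by_cases hij : i = j
      · subst hij; simpa using hxV
      · simp [hij]
    simpa [Pi.single_apply] using hV (Pi.single j x) s hmem hrel
  have h0 : (N : ℚ) • (c : ℚ) • r j • v = 0 :=
    calc (N : ℚ) • (c : ℚ) • r j • v = ((N : ℚ) • r j) • (c : ℚ) • v := by
          rw [smul_assoc, smul_comm (r j) (c : ℚ) v]
      _ = ι (s j • x) := by rw [map_smul_eq_intCastMA_smul ι hequiv, hs, hcx]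
      _ = 0 := by rw [hsx, map_zero]
  simpa [hN, hc] using h0

theorem finite_quotient_span_of_span_eq_top [Finite G] [Module.Finite (MonoidAlgebra ℤ G) M]
    [Module ℚ 𝓜] [IsScalarTower ℚ (MonoidAlgebra ℚ G) 𝓜]
    (ι : M →+ 𝓜) (hinj : Function.Injective ι)
    (hequiv : ∀ (g : G) (x : M), ι (MonoidAlgebra.of ℤ G g • x) = MonoidAlgebra.of ℚ G g • ι x)
    {κ : Type*} [Fintype κ] (m : κ → M)
    (htop : span (MonoidAlgebra ℚ G) (range fun i => ι (m i)) = ⊤) :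
    Finite (M ⧸ span (MonoidAlgebra ℤ G) (range m)) := by
  set U := span (MonoidAlgebra ℤ G) (range m)
  have : Module.Finite ℤ M := Module.Finite.trans (MonoidAlgebra ℤ G) M
  have : Module.Finite ℤ (M ⧸ U) :=
    Module.Finite.of_surjective (U.mkQ.restrictScalars ℤ) U.mkQ_surjective
  refine Module.finite_of_fg_torsion _ fun q => ?_
  obtain ⟨x, rfl⟩ := U.mkQ_surjective q
  obtain ⟨r, hr⟩ := (mem_span_range_iff_exists_fun _).1 (htop ▸ mem_top : ι x ∈ _)
  obtain ⟨N, hN, s, hs⟩ := exists_intCastMA_eq_smul r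
  have hNx : N • x = ∑ i, s i • m i := hinj <| by
    simp only [map_zsmul, map_sum, map_smul_eq_intCastMA_smul ι hequiv, hs, smul_assoc,
      ← Finset.smul_sum, hr, Int.cast_smul_eq_zsmul]
  refine ⟨⟨N, mem_nonZeroDivisors_of_ne_zero hN⟩, ?_⟩
  change N • U.mkQ x = 0
  rw [← map_zsmul, mkQ_apply, Quotient.mk_eq_zero, hNx]
  exact sum_mem fun i _ => U.smul_mem _ (subset_span ⟨i, rfl⟩)

end GroupRing

theorem exists_nonzero_combination_in_complement_general
    (G : Type*) [Group G] [Finite G]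
    (M : Type*) [AddCommGroup M] [Module (MonoidAlgebra ℤ G) M]
    [Module.Finite (MonoidAlgebra ℤ G) M]
    (𝓜 : Type*) [AddCommGroup 𝓜] [Module ℚ 𝓜] [Module (MonoidAlgebra ℚ G) 𝓜]
    [IsScalarTower ℚ (MonoidAlgebra ℚ G) 𝓜]
    (ι : M →+ 𝓜) (hinj : Function.Injective ι)
    (hequiv : ∀ (g : G) (x : M),
      ι (MonoidAlgebra.of ℤ G g • x) = MonoidAlgebra.of ℚ G g • ι x)
    (hdiv : ∀ y : 𝓜, ∃ (c : ℤ) (x : M), c ≠ 0 ∧ (c : ℚ) • y = ι x)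
    (d : ℕ)
    (hgen : ∃ y : Fin d → 𝓜, Submodule.span (MonoidAlgebra ℚ G) (Set.range y) = ⊤)
    (m : Fin d → M)
    (hU : Infinite (M ⧸ Submodule.span (MonoidAlgebra ℤ G) (Set.range m)))
    (𝓥 : Submodule (MonoidAlgebra ℚ G) 𝓜)
    (hcompl : IsCompl
      (Submodule.span (MonoidAlgebra ℚ G) (Set.range fun i => ι (m i))) 𝓥) :
    ∃ (h : Fin d → M) (s : Fin d → MonoidAlgebra ℤ G),
      (∀ i, ι (h i) ∈ 𝓥) ∧
      (∑ i, intCastMA G (s i) • ι (m i) = 0) ∧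
      ∑ i, s i • h i ≠ 0 := by
  obtain ⟨y, hy⟩ := hgen
  by_contra! hcon
  have hker := ker_linearCombination_le_pi_annihilator ι hequiv hdiv m 𝓥 hcon
  have htop := span_eq_top_of_ker_linearCombination_le_pi_annihilator ℚ hy
    hcompl.sup_eq_top hker
  exact not_finite_iff_infinite.2 hU (finite_quotient_span_of_span_eq_top ι hinj hequiv m htop)

/-- Proposition: let `G` be a finite group, `M` a finitely generated `ℤG`-module that is
`ℤ`-torsion-free, and `m₁, …, m_d ∈ M` generators of a `ℤG`-submodule `U` of infinite
index in `M`; assume `𝓜 := M ⊗_ℤ ℚ` (realized as any `ℚG`-module containing `M` via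
`ι : m ↦ 1 ⊗ m` with `𝓜 = ℚ·ι(M)`) is `d`-generated as a `ℚG`-module. Let `𝓥` be a
`ℚG`-module complement of `𝓤 := U ⊗ ℚ` in `𝓜`, and `V := M ∩ 𝓥`. Then there exist
`h₁, …, h_d ∈ V` and a tuple `(s₁, …, s_d) ∈ L := ker f ∩ (ℤG)^{(d)}` — where
`f : (ℚG)^{(d)} → 𝓜` is `f(r₁, …, r_d) = ∑ᵢ rᵢ mᵢ` — such that `∑ᵢ sᵢ hᵢ ≠ 0`. -/
theorem exists_nonzero_combination_in_complement
    (G : Type*) [Group G] [Finite G]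
    (M : Type*) [AddCommGroup M] [Module (MonoidAlgebra ℤ G) M]
    [Module.Finite (MonoidAlgebra ℤ G) M] [NoZeroSMulDivisors ℤ M]
    (𝓜 : Type*) [AddCommGroup 𝓜] [Module ℚ 𝓜] [Module (MonoidAlgebra ℚ G) 𝓜]
    [IsScalarTower ℚ (MonoidAlgebra ℚ G) 𝓜]
    (ι : M →+ 𝓜) (hinj : Function.Injective ι)
    (hequiv : ∀ (g : G) (x : M),
      ι (MonoidAlgebra.of ℤ G g • x) = MonoidAlgebra.of ℚ G g • ι x)
    (hdiv : ∀ y : 𝓜, ∃ (c : ℤ) (x : M), c ≠ 0 ∧ (c : ℚ) • y = ι x)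
    (d : ℕ)
    (hgen : ∃ y : Fin d → 𝓜, Submodule.span (MonoidAlgebra ℚ G) (Set.range y) = ⊤)
    (m : Fin d → M)
    (hU : Infinite (M ⧸ Submodule.span (MonoidAlgebra ℤ G) (Set.range m)))
    (𝓥 : Submodule (MonoidAlgebra ℚ G) 𝓜)
    (hcompl : IsCompl
      (Submodule.span (MonoidAlgebra ℚ G) (Set.range fun i => ι (m i))) 𝓥) :
    ∃ (h : Fin d → M) (s : Fin d → MonoidAlgebra ℤ G),
      (∀ i, ι (h i) ∈ 𝓥) ∧
      (∑ i, intCastMA G (s i) • ι (m i) = 0) ∧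
      ∑ i, s i • h i ≠ 0 :=
  exists_nonzero_combination_in_complement_general G M 𝓜 ι hinj hequiv hdiv d hgen m hU 𝓥 hcompl
end

section
/- Let p be a prime, G a finite group, and A an abelian pro-p group which is a finitely generated ℤ_pG-module. Let dim A denote the torsion-free rank of A as a ℤ_p-module. Then t(A/(G−1)A) ≤ t(A)·|G|^{dim A}, where (G−1)A is the submodule of A generated by all elements (g−1)a with g ∈ G, a ∈ A. -/
variable (p : ℕ) [Fact p.Prime] (G : Type*) [Group G] (A : Type*) [AddCommGroup A]
  [Module ℤ_[p] A] [Module (MonoidAlgebra ℤ_[p] G) A]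
  [IsScalarTower ℤ_[p] (MonoidAlgebra ℤ_[p] G) A]

/-- The fixed-point submodule `A^G = {a ∈ A ∣ g • a = a for all g ∈ G}`. -/
def fixedSubmodule : Submodule ℤ_[p] A where
  carrier := {a | ∀ g : G, (MonoidAlgebra.of ℤ_[p] G g) • a = a}
  add_mem' := fun ha hb => fun g => by rw [smul_add, ha g, hb g]
  zero_mem' := fun g => smul_zero _
  smul_mem' := fun c a ha => fun g => by
    rw [← algebraMap_smul (MonoidAlgebra ℤ_[p] G) c a, ← mul_smul, ← Algebra.commutes,
      mul_smul, ha g]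

/-- The submodule `(G−1)A`, generated by all elements `g • a - a` with `g ∈ G`, `a ∈ A`. -/
noncomputable def augmentationSubmodule : Submodule ℤ_[p] A :=
  Submodule.span ℤ_[p] {x | ∃ (g : G) (a : A), x = (MonoidAlgebra.of ℤ_[p] G g) • a - a}

/-! Write `B = (G−1)A` and `T` for the torsion of `A`. The norm element `N = ∑ g` of `ℤ_pG` kills
`B`, maps `T` into `T`, and `N a ≡ |G| a` modulo `B`; hence if `a` is torsion modulo `B + T`, then
`N a ∈ T` and `|G| a ∈ B + T`. So the torsion of `A/(B + T)` is killed by `|G|`; as it lies in a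
quotient of the free `ℤ_p`-module `A/T` of rank `dim A`, it is spanned by `dim A` elements and has
at most `|ℤ_p/|G|ℤ_p| ^ dim A ≤ |G| ^ dim A` elements. The kernel of `A/B → A/(B + T)` is the
image of the finite group `T`, which accounts for the factor `t(A)`. -/

open Submodule

section Ring

variable {R M N : Type*} [Ring R] [AddCommGroup M] [Module R M] [AddCommGroup N] [Module R N]

theorem Submodule.ker_factor_sup_left (P Q : Submodule R M) :
    LinearMap.ker (factor (le_sup_left : P ≤ P ⊔ Q)) = Q.map P.mkQ := by
  rw [factor, ker_mapQ, comap_id, map_sup, mkQ_map_self, bot_sup_eq]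

theorem finite_and_card_le_card_ker_mul_card_map (f : M →ₗ[R] N) (P : Submodule R M)
    [Finite (LinearMap.ker f)] [Finite (P.map f)] :
    Finite P ∧ Nat.card P ≤ Nat.card (LinearMap.ker f) * Nat.card (P.map f) := by
  let g := f.submoduleMap P
  have hker : Function.Injective fun x : LinearMap.ker g =>
      (⟨x.1.1, congrArg Subtype.val (LinearMap.mem_ker.mp x.2)⟩ : LinearMap.ker f) :=
    fun _ _ h => Subtype.ext (Subtype.ext (congrArg Subtype.val h :))
  have : Finite (LinearMap.ker g) := Finite.of_injective _ hker
  have hcard : Nat.card P = Nat.card (LinearMap.ker g) * Nat.card (P.map f) := by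
    rw [card_eq_card_quotient_mul_card (LinearMap.ker g),
      Nat.card_congr (g.quotKerEquivOfSurjective (f.submoduleMap_surjective P)).toEquiv]
  refine ⟨Nat.finite_of_card_ne_zero ?_, ?_⟩
  · rw [hcard]
    exact Nat.mul_ne_zero Nat.card_pos.ne' Nat.card_pos.ne'
  · rw [hcard]
    exact Nat.mul_le_mul_right _ (Nat.card_le_card_of_injective _ hker)

end Ring

section CommRing

variable {R M N : Type*} [CommRing R] [AddCommGroup M] [Module R M] [AddCommGroup N] [Module R N]

theorem Submodule.torsion_le_comap_torsion (f : M →ₗ[R] N) :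
    torsion R M ≤ (torsion R N).comap f := by
  rintro x ⟨c, hc⟩
  exact ⟨c, by rw [Submonoid.smul_def, ← map_smul, ← Submonoid.smul_def, hc, map_zero]⟩

theorem smul_eq_smul_of_sub_mem_span {a r s : R} {x : M} (hx : a • x = 0)
    (h : r - s ∈ Ideal.span {a}) : r • x = s • x := by
  obtain ⟨t, ht⟩ := Ideal.mem_span_singleton'.mp h
  rw [← sub_eq_zero, ← sub_smul, ← ht, mul_smul, hx, smul_zero]

theorem finite_span_range_and_card_le_of_smul_eq_zero {ι : Type*} [Fintype ι] {g : ι → M}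
    {a : R} (hg : ∀ i, a • g i = 0) [Finite (R ⧸ Ideal.span {a})] :
    Finite (span R (Set.range g)) ∧
      Nat.card (span R (Set.range g)) ≤ Nat.card (R ⧸ Ideal.span {a}) ^ Fintype.card ι := by
  let φ : (ι → R ⧸ Ideal.span {a}) → span R (Set.range g) := fun c =>
    ⟨∑ i, (c i).out • g i, sum_mem fun i _ => smul_mem _ _ (subset_span ⟨i, rfl⟩)⟩
  have hφ : Function.Surjective φ := by
    rintro ⟨x, hx⟩
    obtain ⟨c, rfl⟩ := (mem_span_range_iff_exists_fun R).mp hx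
    refine ⟨fun i => Ideal.Quotient.mk _ (c i), Subtype.ext (Finset.sum_congr rfl fun i _ => ?_)⟩
    exact smul_eq_smul_of_sub_mem_span (hg i) (Ideal.Quotient.eq.mp (Ideal.Quotient.mk_out _))
  refine ⟨Finite.of_surjective φ hφ, ?_⟩
  calc Nat.card (span R (Set.range g)) ≤ Nat.card (ι → R ⧸ Ideal.span {a}) :=
        Nat.card_le_card_of_surjective φ hφ
    _ = _ := by rw [Nat.card_pi, Finset.prod_const, Finset.card_univ]

theorem Module.finite_of_isTorsionBy [Module.Finite R M] {a : R} (ha : Module.IsTorsionBy R M a)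
    [Finite (R ⧸ Ideal.span {a})] : Finite M := by
  obtain ⟨n, s, hs⟩ := Module.Finite.exists_fin (R := R) (M := M)
  have := (finite_span_range_and_card_le_of_smul_eq_zero fun i => @ha (s i)).1
  rw [hs] at this
  exact Finite.of_equiv _ (Submodule.topEquiv (R := R) (M := M)).toEquiv

theorem finite_and_card_le_of_le_range_of_smul_eq_zero [IsDomain R] [IsPrincipalIdealRing R]
    {F : Type*} [AddCommGroup F] [Module R F] [Module.Finite R F] [Module.IsTorsionFree R F]
    (f : F →ₗ[R] M) {S : Submodule R M} (hS : S ≤ LinearMap.range f) {a : R}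
    (ha : ∀ x ∈ S, a • x = 0) [Finite (R ⧸ Ideal.span {a})] :
    Finite S ∧ Nat.card S ≤ Nat.card (R ⧸ Ideal.span {a}) ^ Module.finrank R F := by
  -- `S` is the image of `f⁻¹ S`, which is free of rank at most `finrank F` since `R` is a PID.
  let C := S.comap f
  let b := Module.Free.chooseBasis R C
  have hS_eq : S = span R (Set.range (f ∘ C.subtype ∘ b)) := by
    rw [Set.range_comp, Set.range_comp, ← map_span, ← map_span, b.span_eq, Submodule.map_top,
      range_subtype, map_comap_eq, inf_eq_right.mpr hS]
  have hcard : Fintype.card (Module.Free.ChooseBasisIndex R C) ≤ Module.finrank R F := by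
    rw [← Module.finrank_eq_card_chooseBasisIndex]
    exact Submodule.finrank_le C
  obtain ⟨hfin, hle⟩ := finite_span_range_and_card_le_of_smul_eq_zero
    (g := f ∘ C.subtype ∘ b) fun i => ha _ (hS_eq ▸ subset_span ⟨i, rfl⟩)
  rw [← hS_eq] at hfin hle
  exact ⟨hfin, hle.trans (Nat.pow_le_pow_right Nat.card_pos hcard)⟩

end CommRing

namespace PadicInt

variable {p}

theorem span_singleton_eq_span_p_pow_valuation {x : ℤ_[p]} (hx : x ≠ 0) :
    Ideal.span {x} = Ideal.span {(p : ℤ_[p]) ^ x.valuation} :=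
  Ideal.span_singleton_eq_span_singleton.mpr
    (Associated.symm ⟨unitCoeff hx, by rw [mul_comm, ← unitCoeff_spec hx]⟩)

theorem card_quotient_span_singleton {x : ℤ_[p]} (hx : x ≠ 0) :
    Nat.card (ℤ_[p] ⧸ Ideal.span {x}) = p ^ x.valuation := by
  rw [span_singleton_eq_span_p_pow_valuation hx, ← ker_toZModPow,
    Nat.card_congr (RingHom.quotientKerEquivOfSurjective (ZMod.ringHom_surjective _)).toEquiv,
    Nat.card_zmod]

theorem finite_quotient_span_singleton {x : ℤ_[p]} (hx : x ≠ 0) :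
    Finite (ℤ_[p] ⧸ Ideal.span {x}) :=
  Nat.finite_of_card_ne_zero (card_quotient_span_singleton hx ▸ NeZero.ne _)

theorem card_quotient_span_natCast_le {n : ℕ} (hn : n ≠ 0) :
    Nat.card (ℤ_[p] ⧸ Ideal.span {(n : ℤ_[p])}) ≤ n := by
  have hvaluation : (n : ℤ_[p]).valuation = padicValNat p n := by
    rw [← Nat.cast_inj (R := ℤ), ← valuation_coe, coe_natCast, Padic.valuation_natCast]
  rw [card_quotient_span_singleton (Nat.cast_ne_zero.mpr hn), hvaluation]
  exact Nat.le_of_dvd (Nat.pos_of_ne_zero hn) pow_padicValNat_dvd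

theorem finite_torsion (M : Type*) [AddCommGroup M] [Module ℤ_[p] M] [Module.Finite ℤ_[p] M] :
    Finite (torsion ℤ_[p] M) := by
  obtain ⟨a, ha, ha0⟩ := annihilator_top_inter_nonZeroDivisors
    (torsion_isTorsion (R := ℤ_[p]) (M := M))
  have := finite_quotient_span_singleton (nonZeroDivisors.ne_zero ha0)
  exact Module.finite_of_isTorsionBy fun x => mem_annihilator.mp ha x mem_top

end PadicInt

theorem addTorsionSet_eq_torsion (M : Type*) [AddCommGroup M] [Module ℤ_[p] M] :
    addTorsionSet M = (torsion ℤ_[p] M : Set M) := by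
  ext x
  constructor
  · rintro ⟨n, hn, h⟩
    exact ⟨⟨n, mem_nonZeroDivisors_of_ne_zero (Nat.cast_ne_zero.mpr hn.ne')⟩,
      by simpa [Nat.cast_smul_eq_nsmul] using h⟩
  · rintro ⟨⟨c, hc⟩, h⟩
    have hc0 := nonZeroDivisors.ne_zero hc
    obtain ⟨t, ht⟩ := Ideal.mem_span_singleton'.mp
      ((PadicInt.span_singleton_eq_span_p_pow_valuation hc0).ge (Ideal.mem_span_singleton_self _))
    refine ⟨p ^ c.valuation, pow_pos (Fact.out : p.Prime).pos _, ?_⟩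
    rw [← Nat.cast_smul_eq_nsmul ℤ_[p], Nat.cast_pow, ← ht, mul_smul]
    exact (congrArg (t • ·) h).trans (smul_zero t)

namespace GroupAlgebra

noncomputable def norm (k : Type*) [Semiring k] [Fintype G] : MonoidAlgebra k G :=
  ∑ g : G, MonoidAlgebra.of k G g

theorem norm_mul_of (k : Type*) [Semiring k] [Fintype G] (g : G) :
    norm G k * MonoidAlgebra.of k G g = norm G k := by
  simp only [norm, Finset.sum_mul, ← map_mul]
  exact Fintype.sum_equiv (Equiv.mulRight g) _ _ fun _ => rfl

variable {G} [Fintype G]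

theorem norm_smul_eq_zero_of_mem_augmentationSubmodule {x : A}
    (hx : x ∈ augmentationSubmodule p G A) : norm G ℤ_[p] • x = 0 := by
  suffices augmentationSubmodule p G A ≤
      LinearMap.ker (DistribSMul.toLinearMap ℤ_[p] A (norm G ℤ_[p])) from this hx
  refine span_le.mpr ?_
  rintro _ ⟨g, a, rfl⟩
  change norm G ℤ_[p] • (MonoidAlgebra.of ℤ_[p] G g • a - a) = 0
  rw [smul_sub, smul_smul, norm_mul_of, sub_self]

omit [IsScalarTower ℤ_[p] (MonoidAlgebra ℤ_[p] G) A] in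
theorem norm_smul_sub_card_smul_mem_augmentationSubmodule (a : A) :
    norm G ℤ_[p] • a - Fintype.card G • a ∈ augmentationSubmodule p G A := by
  rw [norm, Finset.sum_smul, ← Finset.card_univ, ← Finset.sum_const, ← Finset.sum_sub_distrib]
  exact sum_mem fun g _ => subset_span ⟨g, a, rfl⟩

end GroupAlgebra

theorem card_smul_eq_zero_of_mem_torsion [Finite G]
    {x : A ⧸ (augmentationSubmodule p G A ⊔ torsion ℤ_[p] A)} (hx : x ∈ torsion ℤ_[p] _) :
    (Nat.card G : ℤ_[p]) • x = 0 := by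
  have := Fintype.ofFinite G
  set N := GroupAlgebra.norm G ℤ_[p]
  obtain ⟨a, rfl⟩ := mkQ_surjective _ x
  obtain ⟨c, hc⟩ := hx
  obtain ⟨b, hb, t, ht, hbt⟩ := mem_sup.mp ((Quotient.mk_eq_zero _).mp
    (by rwa [Submonoid.smul_def, ← map_smul] at hc))
  have hNt : N • t ∈ torsion ℤ_[p] A :=
    torsion_le_comap_torsion (DistribSMul.toLinearMap ℤ_[p] A N) ht
  have hNa : N • a ∈ torsion ℤ_[p] A := by
    obtain ⟨c', hc'⟩ := hNt
    refine ⟨c' * c, ?_⟩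
    rwa [mul_smul, Submonoid.smul_def c, ← smul_comm N (c : ℤ_[p]) a, ← hbt, smul_add,
      GroupAlgebra.norm_smul_eq_zero_of_mem_augmentationSubmodule p A hb, zero_add]
  rw [← map_smul, mkQ_apply, Quotient.mk_eq_zero, Nat.card_eq_fintype_card,
    Nat.cast_smul_eq_nsmul, ← sub_sub_cancel (N • a) (Fintype.card G • a)]
  exact sub_mem (mem_sup_right hNa)
    (mem_sup_left (GroupAlgebra.norm_smul_sub_card_smul_mem_augmentationSubmodule p A a))

theorem finite_torsion_quotient_sup_and_card_le [Finite G] [Module.Finite ℤ_[p] A] :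
    Finite (torsion ℤ_[p] (A ⧸ (augmentationSubmodule p G A ⊔ torsion ℤ_[p] A))) ∧
      Nat.card (torsion ℤ_[p] (A ⧸ (augmentationSubmodule p G A ⊔ torsion ℤ_[p] A))) ≤
        Nat.card G ^ Module.finrank ℤ_[p] (A ⧸ torsion ℤ_[p] A) := by
  have hG : Nat.card G ≠ 0 := Nat.card_pos.ne'
  have := PadicInt.finite_quotient_span_singleton (p := p) (Nat.cast_ne_zero.mpr hG)
  have hrange := LinearMap.range_eq_top.mpr (factor_surjective (le_sup_right :
    torsion ℤ_[p] A ≤ augmentationSubmodule p G A ⊔ torsion ℤ_[p] A))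
  obtain ⟨hfin, hcard⟩ := finite_and_card_le_of_le_range_of_smul_eq_zero _ (hrange ▸ le_top)
    fun _ => card_smul_eq_zero_of_mem_torsion p G A
  exact ⟨hfin, hcard.trans (Nat.pow_le_pow_left (PadicInt.card_quotient_span_natCast_le hG) _)⟩

/-- Proposition: let `G` be a finite group and `A` an abelian pro-`p` group which is a
finitely generated `ℤ_pG`-module; let `dim A` be the torsion-free rank of `A` as a
`ℤ_p`-module (the rank of `A` modulo its torsion submodule). Then
`t(A/(G−1)A) ≤ t(A) * |G| ^ (dim A)`. -/
theorem torsion_coinvariants_le (hG : Finite G)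
    [Module.Finite (MonoidAlgebra ℤ_[p] G) A] :
    (addTorsionSet (A ⧸ augmentationSubmodule p G A)).Finite ∧
    Nat.card (addTorsionSet (A ⧸ augmentationSubmodule p G A)) ≤
      Nat.card (addTorsionSet A) *
        Nat.card G ^ (Module.finrank ℤ_[p] (A ⧸ Submodule.torsion ℤ_[p] A)) := by
  have : Module.Finite ℤ_[p] A := .trans (MonoidAlgebra ℤ_[p] G) A
  set B := augmentationSubmodule p G A
  set T := torsion ℤ_[p] A
  have : Finite T := PadicInt.finite_torsion A
  let f := factor (le_sup_left : B ≤ B ⊔ T)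
  have hker : LinearMap.ker f = T.map B.mkQ := ker_factor_sup_left B T
  have hT := B.mkQ.submoduleMap_surjective T
  have : Finite (LinearMap.ker f) := hker ▸ Finite.of_surjective _ hT
  have hker_card : Nat.card (LinearMap.ker f) ≤ Nat.card T :=
    hker ▸ Nat.card_le_card_of_surjective _ hT
  obtain ⟨_, hQ_card⟩ := finite_torsion_quotient_sup_and_card_le p G A
  have hmap : (torsion ℤ_[p] (A ⧸ B)).map f ≤ torsion ℤ_[p] (A ⧸ (B ⊔ T)) :=
    map_le_iff_le_comap.mpr (torsion_le_comap_torsion f)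
  have : Finite ((torsion ℤ_[p] (A ⧸ B)).map f) := Finite.Set.subset _ hmap
  obtain ⟨hfin, hcard⟩ := finite_and_card_le_card_ker_mul_card_map f (torsion ℤ_[p] (A ⧸ B))
  rw [addTorsionSet_eq_torsion p, addTorsionSet_eq_torsion p]
  exact ⟨Set.finite_coe_iff.mp hfin,
    hcard.trans (Nat.mul_le_mul hker_card ((Nat.card_mono (Set.toFinite _) hmap).trans hQ_card))⟩
end

section
/- Let p be a prime, let G be a p-large group, and let H be a normal subgroup of G of index a power of p. Then G has a normal subgroup S of index a power of p in G such that S is properly contained in H and the abelianization S/[S,S] is infinite. -/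
/-!
Intersect the given normal subgroups to get a normal subgroup `M = N ⊓ H` of `p`-power index.
Its image in the free quotient of `N` is a free group of finite index, hence nontrivial, so `M`
maps onto `ℤ` and therefore onto `ℤ/p`. The normal core `S` in `G` of the kernel of this
character `χ` lies strictly below `H`, and `M/S` embeds in `(ℤ/p)^(G/M)` since the conjugates of
`χ` only depend on the coset in `G/M`; so `S` has `p`-power index. Being of finite index in `N`,
`S` again maps onto `ℤ`, so its abelianization is infinite.
-/

/-- A group `G` is `p`-large if it has a normal subgroup of index a power of `p` that has a
nonabelian free group as a homomorphic image. -/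
def PLarge (p : ℕ) (G : Type*) [Group G] : Prop :=
  ∃ N : Subgroup G, N.Normal ∧ (∃ k : ℕ, N.index = p ^ k) ∧
    ∃ (ι : Type) (_ : Nontrivial ι) (φ : ↥N →* FreeGroup ι), Function.Surjective φ

theorem Subgroup.infinite_of_index_ne_zero {G : Type*} [Group G] [Infinite G] {H : Subgroup G}
    (hH : H.index ≠ 0) : Infinite H := by
  have h := H.card_mul_index
  rw [Nat.card_eq_zero_of_infinite (α := G), mul_eq_zero, or_iff_left hH, Nat.card_eq_zero] at h
  exact h.resolve_left (by simp)

theorem Subgroup.index_inf_dvd_of_normal {G : Type*} [Group G] (H K : Subgroup G) [H.Normal] :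
    (H ⊓ K).index ∣ H.index * K.index := by
  rw [← relIndex_mul_index inf_le_right, inf_relIndex_right]
  exact mul_dvd_mul_right (relIndex_dvd_index_of_normal H K) _

theorem MonoidHom.index_iInf_ker_dvd_pow {G A ι : Type*} [Group G] [Group A] [Finite ι]
    [Finite A] (f : ι → G →* A) : (⨅ i, (f i).ker).index ∣ Nat.card A ^ Nat.card ι := by
  have : ⨅ i, (f i).ker = (MonoidHom.pi f).ker := by
    ext x
    simp [Subgroup.mem_iInf, funext_iff]
  rw [this, Subgroup.index_ker, ← Nat.card_fun]
  exact Subgroup.card_subgroup_dvd_card _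

theorem IsFreeGroup.exists_surjective_multiplicativeInt (F : Type*) [Group F] [IsFreeGroup F]
    [Nontrivial F] : ∃ ψ : F →* Multiplicative ℤ, Function.Surjective ψ := by
  have : Nonempty (Generators F) := by
    by_contra h
    rw [not_nonempty_iff] at h
    exact not_subsingleton F (toFreeGroup F).toEquiv.subsingleton
  obtain ⟨a⟩ := this
  refine ⟨lift fun _ => Multiplicative.ofAdd 1, fun x => ⟨of a ^ x.toAdd, ?_⟩⟩
  simp [← ofAdd_zsmul]

theorem exists_surjective_multiplicativeInt_of_le {G F : Type*} [Group G] [Group F]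
    [IsFreeGroup F] [Nontrivial F] {N T : Subgroup G} (hTN : T ≤ N) (hT : T.index ≠ 0)
    {φ : N →* F} (hφ : Function.Surjective φ) :
    ∃ ψ : T →* Multiplicative ℤ, Function.Surjective ψ := by
  obtain ⟨χ, hχ⟩ := IsFreeGroup.exists_surjective_multiplicativeInt F
  have : Infinite F := .of_surjective χ hχ
  set f := φ.comp (Subgroup.inclusion hTN)
  have hrange : f.range = (T.subgroupOf N).map φ := by
    rw [MonoidHom.range_comp, Subgroup.inclusion_range]
  have : Infinite f.range := by
    refine Subgroup.infinite_of_index_ne_zero fun h0 => hT (Nat.eq_zero_of_zero_dvd ?_)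
    rw [← h0, hrange]
    exact (Subgroup.index_map_dvd _ hφ).trans (Subgroup.relIndex_dvd_index_of_le hTN)
  -- `f.range` is free by the Nielsen–Schreier theorem.
  obtain ⟨ψ, hψ⟩ := IsFreeGroup.exists_surjective_multiplicativeInt f.range
  exact ⟨ψ.comp f.rangeRestrict, hψ.comp f.rangeRestrict_surjective⟩

theorem Abelianization.infinite_of_surjective {G A : Type*} [Group G] [CommGroup A] [Infinite A]
    {f : G →* A} (hf : Function.Surjective f) : Infinite (Abelianization G) :=
  .of_surjective (lift f) fun a =>
    let ⟨g, hg⟩ := hf a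
    ⟨of g, by rw [lift_apply_of, hg]⟩

section NormalCore

variable {G A : Type*} [Group G] [CommGroup A] {M : Subgroup G} [M.Normal]

theorem MonoidHom.comp_conjNormal_mul_of_mem (χ : M →* A) (g : G) {n : G} (hn : n ∈ M) :
    χ.comp (MulAut.conjNormal (g * n)).toMonoidHom =
      χ.comp (MulAut.conjNormal g).toMonoidHom := by
  ext x
  have : MulAut.conjNormal n x = ⟨n, hn⟩ * x * ⟨n, hn⟩⁻¹ := by ext; simp
  simp [map_mul, this]

/-- The normal core `S` of `ker χ` in `G`. -/
theorem Subgroup.exists_normal_subgroupOf_le_ker_relIndex_dvd_pow [Finite A] [M.FiniteIndex]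
    (χ : M →* A) :
    ∃ S : Subgroup G, S.Normal ∧ S ≤ M ∧ S.subgroupOf M ≤ χ.ker ∧
      S.relIndex M ∣ Nat.card A ^ M.index := by
  set S := (χ.ker.map M.subtype).normalCore
  have hS : S.subgroupOf M = ⨅ g : G, (χ.comp (MulAut.conjNormal g).toMonoidHom).ker := by
    ext x
    rw [mem_subgroupOf, mem_iInf]
    refine forall_congr' fun g => ?_
    rw [show g * x * g⁻¹ = M.subtype (MulAut.conjNormal g x) by simp,
      mem_map_iff_mem M.subtype_injective]
    rfl
  obtain ⟨f, hf⟩ : ∃ f : G ⧸ M → (M →* A),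
      ∀ g : G, f g = χ.comp (MulAut.conjNormal g).toMonoidHom :=
    ⟨Quotient.lift (s := QuotientGroup.leftRel M)
      (fun g => χ.comp (MulAut.conjNormal g).toMonoidHom) fun a b h => by
        rw [← mul_inv_cancel_left a b,
          χ.comp_conjNormal_mul_of_mem a (QuotientGroup.leftRel_apply.mp h)], fun _ => rfl⟩
  refine ⟨S, normalCore_normal _, (normalCore_le _).trans (map_subtype_le _), ?_, ?_⟩
  · calc S.subgroupOf M ≤ (χ.ker.map M.subtype).subgroupOf M := comap_mono (normalCore_le _)
      _ = χ.ker := comap_map_eq_self_of_injective M.subtype_injective _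
  · rw [relIndex, hS]
    simp only [← hf]
    rw [QuotientGroup.mk_surjective.iInf_comp fun c => (f c).ker]
    exact MonoidHom.index_iInf_ker_dvd_pow f

end NormalCore

/-- If `G` is a `p`-large group and `H` is a normal subgroup of `G` of index a power of
`p`, then `G` has a normal subgroup `S` of index a power of `p`, properly contained in `H`,
whose abelianization is infinite. -/
theorem exists_normal_lt_infinite_abelianization (p : ℕ) (hp : p.Prime)
    (G : Type*) [Group G] (hG : PLarge p G)
    (H : Subgroup G) (hH : H.Normal) (hHidx : ∃ k : ℕ, H.index = p ^ k) :
    ∃ S : Subgroup G, S.Normal ∧ (∃ k : ℕ, S.index = p ^ k) ∧ S < H ∧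
      Infinite (Abelianization ↥S) := by
  have : Fact p.Prime := ⟨hp⟩
  obtain ⟨N, hN, ⟨k, hk⟩, ι, hι, φ, hφ⟩ := hG
  obtain ⟨m, hm⟩ := hHidx
  set M := N ⊓ H
  have hM : M.index ∣ p ^ (k + m) := by
    rw [pow_add, ← hk, ← hm]
    exact N.index_inf_dvd_of_normal H
  have : M.FiniteIndex := ⟨ne_zero_of_dvd_ne_zero (pow_ne_zero _ hp.ne_zero) hM⟩
  obtain ⟨ψ, hψ⟩ :=
    exists_surjective_multiplicativeInt_of_le inf_le_left M.index_ne_zero_of_finite hφ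
  let χ := (Int.castAddHom (ZMod p)).toMultiplicative.comp ψ
  obtain ⟨w, hw⟩ := hψ (.ofAdd 1)
  have hχw : χ w ≠ 1 := by simp [χ, hw]
  obtain ⟨S, hSn, hSM, hSχ, hSM_idx⟩ := M.exists_normal_subgroupOf_le_ker_relIndex_dvd_pow χ
  have hS : S.index ∣ p ^ (M.index + (k + m)) := by
    rw [← Subgroup.relIndex_mul_index hSM, pow_add]
    exact mul_dvd_mul (by simpa using hSM_idx) hM
  obtain ⟨j, -, hj⟩ := (Nat.dvd_prime_pow hp).1 hS
  have hwS : (w : G) ∉ S := fun h => hχw (hSχ h)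
  obtain ⟨ψS, hψS⟩ := exists_surjective_multiplicativeInt_of_le (hSM.trans inf_le_left)
    (hj ▸ pow_ne_zero _ hp.ne_zero) hφ
  have hSH : S < H :=
    SetLike.lt_iff_le_and_exists.2 ⟨hSM.trans inf_le_right, (w : G), w.2.2, hwS⟩
  exact ⟨S, hSn, ⟨j, hj⟩, hSH, Abelianization.infinite_of_surjective hψS⟩
end
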